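/- (Integration-by-parts/telescoping identity.) Let g : [0,Δ] → ℝ be continuously differentiable with bounded derivative, and define σ(x) := 1 if x mod 2Δ < Δ and σ(x) := −1 otherwise. Then both integrals below converge absolutely and ∫_0^∞ a S e^{Sx} s · g(|x mod 2Δ − Δ|) dx = −(a s) · g(Δ) + ∫_0^∞ σ(x) · a e^{Sx} s · g'(|x mod 2Δ − Δ|) dx. -/

import Mathlib

open MeasureTheory Matrix

attribute [local instance] Matrix.normedAddCommGroup Matrix.normedSpace

/-- `e^{xS}` : the matrix exponential of `x • S`. -/
noncomputable def mexp {p : ℕ} (S : Matrix (Fin p) (Fin p) ℝ) (x : ℝ) :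
    Matrix (Fin p) (Fin p) ℝ := NormedSpace.exp (x • S)

/-- The representative of `x` modulo `2Δ` lying in `[0, 2Δ)`. -/
noncomputable def rmod (Δ x : ℝ) : ℝ := 2 * Δ * Int.fract (x / (2 * Δ))

/-!
Write `F(x) = a e^{xS} s` and `T(x) = |x mod 2Δ - Δ|`. `T` is piecewise affine with slopes `∓1`,
so it has right derivative `-σ(x)` at every point, corners included. Hence
`H = F · (g ∘ T)` has right derivative `F' · (g ∘ T) - σ · F · (g' ∘ T)` everywhere, where
`F' = a S e^{xS} s`. As `H` is continuous, `H(0) = (a s) g(Δ)` and `H → 0` at infinity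
(`e^{xS} → 0` and `g ∘ T` is bounded), the fundamental theorem of calculus on `[0, ∞)` gives
the identity. Integrability comes from `|F|, |F'| ≤ C ‖e^{xS}‖`.
-/

open Filter Set Topology

section Pairing

variable {R : Type*} [CommSemiring R] {m n : Type*} [Fintype m] [Fintype n]

@[simps]
def vecMulDotProductₗ (c : m → R) (s : n → R) : Matrix m n R →ₗ[R] R where
  toFun M := (c ᵥ* M) ⬝ᵥ s
  map_add' M N := by simp [vecMul_add, add_dotProduct]
  map_smul' r M := by simp [vecMul_smul, smul_dotProduct]

end Pairing

section MatrixExponential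

variable {p : ℕ} (S : Matrix (Fin p) (Fin p) ℝ) (c s : Fin p → ℝ)

theorem hasDerivAt_vecMul_mexp_dotProduct (x : ℝ) :
    HasDerivAt (fun x => (c ᵥ* mexp S x) ⬝ᵥ s) (((c ᵥ* S) ᵥ* mexp S x) ⬝ᵥ s) x := by
  let _ : NormedRing (Matrix (Fin p) (Fin p) ℝ) := Matrix.linftyOpNormedRing
  let _ : NormedAlgebra ℝ (Matrix (Fin p) (Fin p) ℝ) := Matrix.linftyOpNormedAlgebra
  let _ : NormedAddCommGroup (Matrix (Fin p) (Fin p) ℝ) :=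
    NonUnitalNormedRing.toNormedAddCommGroup
  let _ : NormedSpace ℝ (Matrix (Fin p) (Fin p) ℝ) := NormedAlgebra.toNormedSpace _
  let _ : CompleteSpace (Matrix (Fin p) (Fin p) ℝ) := FiniteDimensional.complete ℝ _
  have := (vecMulDotProductₗ c s).toContinuousLinearMap.hasFDerivAt.comp_hasDerivAt x
    (hasDerivAt_exp_smul_const' S x)
  rw [vecMul_vecMul]
  exact this

theorem continuous_vecMul_mexp_dotProduct :
    Continuous fun x => (c ᵥ* mexp S x) ⬝ᵥ s :=
  continuous_iff_continuousAt.2 fun x => (hasDerivAt_vecMul_mexp_dotProduct S c s x).continuousAt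

theorem tendsto_vecMul_mexp_dotProduct_atTop (hS0 : Tendsto (mexp S) atTop (𝓝 0)) :
    Tendsto (fun x => (c ᵥ* mexp S x) ⬝ᵥ s) atTop (𝓝 0) := by
  simpa [Function.comp_def] using
    ((vecMulDotProductₗ c s).toContinuousLinearMap.continuous.tendsto 0).comp hS0

theorem integrableOn_vecMul_mexp_dotProduct {A : Set ℝ}
    (hSint : IntegrableOn (fun x => ‖mexp S x‖) A) :
    IntegrableOn (fun x => (c ᵥ* mexp S x) ⬝ᵥ s) A := by
  obtain ⟨C, -, hC⟩ := (vecMulDotProductₗ c s).toContinuousLinearMap.bound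
  exact (hSint.const_mul C).mono'
    (continuous_vecMul_mexp_dotProduct S c s).aestronglyMeasurable (.of_forall fun x => hC _)

theorem vecMul_mexp_zero_dotProduct : (c ᵥ* mexp S 0) ⬝ᵥ s = c ⬝ᵥ s := by
  rw [mexp, zero_smul, NormedSpace.exp_zero, vecMul_one]

end MatrixExponential

section TriangleWave

variable {Δ : ℝ}

noncomputable def triangleWave (Δ x : ℝ) : ℝ := |rmod Δ x - Δ|

noncomputable def squareWave (Δ x : ℝ) : ℝ := if rmod Δ x < Δ then 1 else -1

theorem rmod_zero : rmod Δ 0 = 0 := by simp [rmod]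

theorem rmod_mem_Ico (hΔ : 0 < Δ) (x : ℝ) : rmod Δ x ∈ Ico 0 (2 * Δ) :=
  ⟨mul_nonneg (by positivity) (Int.fract_nonneg _),
    mul_lt_of_lt_one_right (by positivity) (Int.fract_lt_one _)⟩

theorem measurable_rmod : Measurable (rmod Δ) := by
  unfold rmod; fun_prop

theorem triangleWave_zero (hΔ : 0 ≤ Δ) : triangleWave Δ 0 = Δ := by
  simp [triangleWave, rmod_zero, abs_of_nonneg hΔ]

theorem triangleWave_mem_Icc (hΔ : 0 < Δ) (x : ℝ) : triangleWave Δ x ∈ Icc 0 Δ := by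
  obtain ⟨h0, h2⟩ := rmod_mem_Ico hΔ x
  exact ⟨abs_nonneg _, abs_le.2 ⟨by linarith, by linarith⟩⟩

theorem continuous_comp_triangleWave (hΔ : 0 ≤ Δ) {f : ℝ → ℝ}
    (hf : ContinuousOn f (Icc 0 Δ)) :
    Continuous fun x => f (triangleWave Δ x) := by
  have h : ContinuousOn (fun t => f |2 * Δ * t - Δ|) (Icc 0 1) := by
    refine hf.comp (by fun_prop) fun t ht => ⟨abs_nonneg _, abs_le.2 ⟨?_, ?_⟩⟩ <;>
      nlinarith [ht.1, ht.2]
  have h01 : f |2 * Δ * 0 - Δ| = f |2 * Δ * 1 - Δ| := by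
    rw [mul_zero, zero_sub, abs_neg, mul_one, two_mul, add_sub_cancel_right]
  exact (h.comp_fract'' h01).comp (continuous_id.div_const (2 * Δ))

theorem exists_bound_comp_triangleWave (hΔ : 0 < Δ) {f : ℝ → ℝ}
    (hf : ContinuousOn f (Icc 0 Δ)) :
    ∃ C, ∀ x, ‖f (triangleWave Δ x)‖ ≤ C := by
  obtain ⟨C, hC⟩ := isCompact_Icc.exists_bound_of_continuousOn hf
  exact ⟨C, fun x => hC _ (triangleWave_mem_Icc hΔ x)⟩

theorem measurable_squareWave : Measurable (squareWave Δ) :=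
  Measurable.ite (measurableSet_lt measurable_rmod measurable_const) measurable_const
    measurable_const

theorem norm_squareWave_le (x : ℝ) : ‖squareWave Δ x‖ ≤ 1 := by
  unfold squareWave; split_ifs <;> simp

theorem rmod_eventuallyEq_nhdsGE (hΔ : 0 < Δ) (x : ℝ) :
    rmod Δ =ᶠ[𝓝[≥] x] fun y => rmod Δ x + (y - x) := by
  have hdiv : Tendsto (fun y => y / (2 * Δ)) (𝓝[≥] x) (𝓝[≥] (x / (2 * Δ))) :=
    (continuous_id.div_const _).continuousWithinAt.tendsto_nhdsWithin
      fun y (hy : x ≤ y) => div_le_div_of_nonneg_right hy (by positivity)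
  filter_upwards [tendsto_pure.1 ((tendsto_floor_right_pure_floor _).comp hdiv)] with y hy
  simp only [rmod, Int.fract, Function.comp_apply] at hy ⊢
  rw [hy]
  field_simp
  ring

theorem hasDerivWithinAt_abs_Ici (t : ℝ) :
    HasDerivWithinAt (|·|) (if t < 0 then -1 else 1) (Ici t) t := by
  split_ifs with ht
  · exact (hasDerivAt_abs_neg ht).hasDerivWithinAt
  · exact (hasDerivWithinAt_id t _).congr (fun y hy => abs_of_nonneg (le_trans (not_lt.1 ht) hy))
      (abs_of_nonneg (not_lt.1 ht))

theorem hasDerivWithinAt_triangleWave (hΔ : 0 < Δ) (x : ℝ) :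
    HasDerivWithinAt (triangleWave Δ) (-squareWave Δ x) (Ici x) x := by
  have hlin : HasDerivWithinAt (fun y => rmod Δ x - Δ + (y - x)) 1 (Ici x) x := by
    simpa using ((hasDerivAt_id x).sub_const x).const_add (rmod Δ x - Δ) |>.hasDerivWithinAt
  have habs := (hasDerivWithinAt_abs_Ici (rmod Δ x - Δ)).comp_of_eq x hlin
    (fun y (hy : x ≤ y) => by simpa using hy) (by ring)
  have hsign : (if rmod Δ x - Δ < 0 then (-1 : ℝ) else 1) * 1 = -squareWave Δ x := by
    simp only [squareWave, sub_neg]; split_ifs <;> norm_num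
  rw [hsign] at habs
  refine habs.congr_of_eventuallyEq ?_ (by simp [triangleWave])
  filter_upwards [rmod_eventuallyEq_nhdsGE hΔ x] with y hy
  simp only [triangleWave, Function.comp_apply, hy]
  ring_nf

end TriangleWave

theorem HasDerivWithinAt.comp_triangleWave {Δ x d : ℝ} (hΔ : 0 < Δ) {f : ℝ → ℝ}
    (hf : HasDerivWithinAt f d (Icc 0 Δ) (triangleWave Δ x)) :
    HasDerivWithinAt (fun y => f (triangleWave Δ y)) (-squareWave Δ x * d) (Ici x) x := by
  have := hf.comp x (hasDerivWithinAt_triangleWave hΔ x) fun y _ => triangleWave_mem_Icc hΔ y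
  rwa [mul_comm] at this

theorem integral_Ioi_of_hasDerivWithinAt_Ioi_of_tendsto {E : Type*} [NormedAddCommGroup E]
    [NormedSpace ℝ E] [CompleteSpace E] {f f' : ℝ → E} {a : ℝ} {m : E}
    (hcont : ContinuousOn f (Ici a)) (hderiv : ∀ x ∈ Ioi a, HasDerivWithinAt f (f' x) (Ioi x) x)
    (f'int : IntegrableOn f' (Ioi a)) (hf : Tendsto f atTop (𝓝 m)) :
    ∫ x in Ioi a, f' x = m - f a := by
  refine tendsto_nhds_unique (intervalIntegral_tendsto_integral_Ioi a f'int tendsto_id) ?_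
  refine (hf.sub_const _).congr' ?_
  filter_upwards [Ici_mem_atTop a] with b (hb : a ≤ b)
  refine (intervalIntegral.integral_eq_sub_of_hasDeriv_right_of_le hb
    (hcont.mono Icc_subset_Ici_self) (fun y hy => hderiv y hy.1) ?_).symm
  rw [intervalIntegrable_iff_integrableOn_Ioc_of_le hb]
  exact f'int.mono_set Ioc_subset_Ioi_self

theorem integration_by_parts_telescoping_general
    (p : ℕ) (S : Matrix (Fin p) (Fin p) ℝ)
    (hS0 : Filter.Tendsto (fun x : ℝ => mexp S x) Filter.atTop (nhds 0))
    (hSint : IntegrableOn (fun x : ℝ => ‖mexp S x‖) (Set.Ici 0))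
    (a s : Fin p → ℝ) (Δ : ℝ) (hΔ : 0 < Δ)
    (g g' : ℝ → ℝ)
    (hderiv : ∀ x ∈ Set.Icc (0 : ℝ) Δ, HasDerivWithinAt g (g' x) (Set.Icc (0 : ℝ) Δ) x)
    (hg'cont : ContinuousOn g' (Set.Icc (0 : ℝ) Δ)) :
    IntegrableOn
      (fun x : ℝ => (((a ᵥ* S) ᵥ* mexp S x) ⬝ᵥ s) * g (|rmod Δ x - Δ|)) (Set.Ici 0)
    ∧ IntegrableOn
        (fun x : ℝ => (if rmod Δ x < Δ then (1 : ℝ) else -1)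
          * (((a ᵥ* mexp S x) ⬝ᵥ s) * g' (|rmod Δ x - Δ|))) (Set.Ici 0)
    ∧ (∫ x in Set.Ici (0 : ℝ), (((a ᵥ* S) ᵥ* mexp S x) ⬝ᵥ s) * g (|rmod Δ x - Δ|))
        = -(a ⬝ᵥ s) * g Δ
          + ∫ x in Set.Ici (0 : ℝ), (if rmod Δ x < Δ then (1 : ℝ) else -1)
              * (((a ᵥ* mexp S x) ⬝ᵥ s) * g' (|rmod Δ x - Δ|)) := by
  have hgcont : ContinuousOn g (Icc 0 Δ) := fun y hy => (hderiv y hy).continuousWithinAt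
  have hG := continuous_comp_triangleWave hΔ.le hgcont
  have hG' := continuous_comp_triangleWave hΔ.le hg'cont
  obtain ⟨Cg, hCg⟩ := exists_bound_comp_triangleWave hΔ hgcont
  obtain ⟨Cg', hCg'⟩ := exists_bound_comp_triangleWave hΔ hg'cont
  have hint₁ : IntegrableOn (fun x => ((a ᵥ* S) ᵥ* mexp S x) ⬝ᵥ s * g (triangleWave Δ x))
      (Ici 0) :=
    (integrableOn_vecMul_mexp_dotProduct S _ s hSint).mul_bdd hG.aestronglyMeasurable
      (.of_forall hCg)
  have hint₂ : IntegrableOn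
      (fun x => squareWave Δ x * ((a ᵥ* mexp S x) ⬝ᵥ s * g' (triangleWave Δ x))) (Ici 0) :=
    ((integrableOn_vecMul_mexp_dotProduct S a s hSint).mul_bdd hG'.aestronglyMeasurable
      (.of_forall hCg')).bdd_mul measurable_squareWave.aestronglyMeasurable
      (.of_forall norm_squareWave_le)
  refine ⟨hint₁, hint₂, ?_⟩
  have hderivH (x : ℝ) :
      HasDerivWithinAt (fun x => (a ᵥ* mexp S x) ⬝ᵥ s * g (triangleWave Δ x))
        (((a ᵥ* S) ᵥ* mexp S x) ⬝ᵥ s * g (triangleWave Δ x)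
          - squareWave Δ x * ((a ᵥ* mexp S x) ⬝ᵥ s * g' (triangleWave Δ x))) (Ici x) x :=
    ((hasDerivAt_vecMul_mexp_dotProduct S a s x).hasDerivWithinAt.fun_mul
      ((hderiv _ (triangleWave_mem_Icc hΔ x)).comp_triangleWave hΔ)).congr_deriv (by ring)
  have hlim : Tendsto (fun x => (a ᵥ* mexp S x) ⬝ᵥ s * g (triangleWave Δ x)) atTop (𝓝 0) :=
    (tendsto_vecMul_mexp_dotProduct_atTop S a s hS0).zero_mul_isBoundedUnder_le
      (isBoundedUnder_of ⟨Cg, fun x => hCg x⟩)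
  have hftc := integral_Ioi_of_hasDerivWithinAt_Ioi_of_tendsto
    (f := fun x => (a ᵥ* mexp S x) ⬝ᵥ s * g (triangleWave Δ x))
    ((continuous_vecMul_mexp_dotProduct S a s).mul hG).continuousOn
    (fun x _ => (hderivH x).mono Ioi_subset_Ici_self)
    ((hint₁.sub hint₂).mono_set Ioi_subset_Ici_self) hlim
  rw [integral_Ici_eq_integral_Ioi, integral_Ici_eq_integral_Ioi]
  rw [integral_sub (hint₁.mono_set Ioi_subset_Ici_self) (hint₂.mono_set Ioi_subset_Ici_self),
    vecMul_mexp_zero_dotProduct, triangleWave_zero hΔ.le] at hftc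
  unfold triangleWave squareWave at hftc
  linarith

/-- integration-by-parts/telescoping identity:
`∫₀^∞ a S e^{Sx} s · g(|x mod 2Δ - Δ|) dx
  = -(a s) g(Δ) + ∫₀^∞ σ(x) · a e^{Sx} s · g'(|x mod 2Δ - Δ|) dx`,
with `σ(x) = 1` if `x mod 2Δ < Δ` and `σ(x) = -1` otherwise; both integrals
converge absolutely. -/
theorem integration_by_parts_telescoping
    (p : ℕ) (hp : 1 ≤ p) (S : Matrix (Fin p) (Fin p) ℝ)
    (hS0 : Filter.Tendsto (fun x : ℝ => mexp S x) Filter.atTop (nhds 0))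
    (hSint : IntegrableOn (fun x : ℝ => ‖mexp S x‖) (Set.Ici 0))
    (a s : Fin p → ℝ) (Δ : ℝ) (hΔ : 0 < Δ)
    (g g' : ℝ → ℝ)
    (hderiv : ∀ x ∈ Set.Icc (0 : ℝ) Δ, HasDerivWithinAt g (g' x) (Set.Icc (0 : ℝ) Δ) x)
    (hg'cont : ContinuousOn g' (Set.Icc (0 : ℝ) Δ))
    (hg'bdd : ∃ C : ℝ, ∀ x ∈ Set.Icc (0 : ℝ) Δ, |g' x| ≤ C) :
    IntegrableOn
      (fun x : ℝ => (((a ᵥ* S) ᵥ* mexp S x) ⬝ᵥ s) * g (|rmod Δ x - Δ|)) (Set.Ici 0)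
    ∧ IntegrableOn
        (fun x : ℝ => (if rmod Δ x < Δ then (1 : ℝ) else -1)
          * (((a ᵥ* mexp S x) ⬝ᵥ s) * g' (|rmod Δ x - Δ|))) (Set.Ici 0)
    ∧ (∫ x in Set.Ici (0 : ℝ), (((a ᵥ* S) ᵥ* mexp S x) ⬝ᵥ s) * g (|rmod Δ x - Δ|))
        = -(a ⬝ᵥ s) * g Δ
          + ∫ x in Set.Ici (0 : ℝ), (if rmod Δ x < Δ then (1 : ℝ) else -1)
              * (((a ᵥ* mexp S x) ⬝ᵥ s) * g' (|rmod Δ x - Δ|)) :=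
  integration_by_parts_telescoping_general p S hS0 hSint a s Δ hΔ g g' hderiv hg'cont
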